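/- arXiv:1605.02043 — 4 statements merged into one kernel-verified Lean document; each statement's English description precedes it below -/
import Mathlib

section
/- Let D' be obtained from D by the clone-and-connect transformation, and let VP be any vertex partition of D' into k clusters that cuts no original edge. Then the number of auxiliary edges cut by VP is at least the vertex-cut cost of the edge partition of D reconstructed from VP. -/
/-!
Fix a vertex `v` and walk along its path of clones. The clusters seen along the path are
exactly the clusters of the edges at `v`, and a new cluster can only appear when the walk
crosses a cut auxiliary edge. Hence the `p_v` clusters at `v` force at least `p_v - 1` cut
auxiliary edges on the path of `v`, and summing over `v` gives the bound.
-/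

open Finset

section ValueChanges

variable {α : Type*} [DecidableEq α]

theorem card_image_range_succ_le_card_filter_ne_add_one (f : ℕ → α) (n : ℕ) :
    #((range (n + 1)).image f) ≤ #((range n).filter (fun i => f i ≠ f (i + 1))) + 1 := by
  induction n with
  | zero => simp
  | succ n ih =>
    have hfilter : (range (n + 1)).filter (fun i => f i ≠ f (i + 1)) =
        if f n ≠ f (n + 1) then insert n ((range n).filter (fun i => f i ≠ f (i + 1)))
        else (range n).filter (fun i => f i ≠ f (i + 1)) := by
      rw [range_add_one, filter_insert]
    rw [range_add_one (n := n + 1), image_insert, hfilter]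
    by_cases hstay : f n = f (n + 1)
    · have hmem : f (n + 1) ∈ (range (n + 1)).image f := mem_image.2 ⟨n, by simp, hstay⟩
      rw [insert_eq_self.2 hmem, if_neg (not_not_intro hstay)]
      exact ih
    · rw [if_pos hstay, card_insert_of_notMem (s := (range n).filter _) (by simp)]
      have := card_insert_le (f (n + 1)) ((range (n + 1)).image f)
      omega

theorem card_image_range_sub_one_le_card_filter_ne (f : ℕ → α) (n : ℕ) :
    #((range n).image f) - 1 ≤ #((range (n - 1)).filter (fun i => f i ≠ f (i + 1))) := by
  cases n with
  | zero => simp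
  | succ n =>
    have := card_image_range_succ_le_card_filter_ne_add_one f n
    simp only [Nat.add_sub_cancel]
    omega

end ValueChanges

/-- for any clone-and-connect transform (given by a path ordering σ v of the
incident edges of each vertex) and any vertex partition Q of the clones cutting no original
edge (encoded by assigning each original edge a cluster), the number of cut auxiliary edges
is at least the vertex-cut cost of the reconstructed edge partition. -/
theorem stmt5 {V : Type*} [Fintype V] [DecidableEq V] (G : SimpleGraph V)
    [DecidableRel G.Adj] {k : ℕ} (Q : Sym2 V → Fin k) (σ : V → ℕ → Sym2 V)
    (hσ : ∀ v : V, Set.BijOn (σ v) ↑(Finset.range (G.degree v)) ↑(G.incidenceFinset v)) :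
    ∑ v : V, (((G.incidenceFinset v).image Q).card - 1) ≤
      ∑ v : V, ((Finset.range (G.degree v - 1)).filter
        (fun i => Q (σ v i) ≠ Q (σ v (i + 1)))).card := by
  refine sum_le_sum fun v _ => ?_
  have hclones : (range (G.degree v)).image (σ v) = G.incidenceFinset v :=
    coe_injective (by rw [coe_image]; exact (hσ v).image_eq)
  rw [← hclones, image_image]
  exact card_image_range_sub_one_le_card_filter_ne (Q ∘ σ v) (G.degree v)
end

section
/- Given a finite graph D and an edge partition EP of D into k clusters, there exists a clone-and-connect transformation D' of D (i.e., a choice of path orderings on each clone set) and a vertex partition of D' cutting no original edge whose auxiliary-edge cut cost equals exactly the vertex-cut cost of EP. -/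
/-!
Order the clones at each vertex by the cluster of their edge. Along a monotone sequence the
value changes exactly (number of distinct values − 1) times, and the distinct values at `v` are
the `p_v` clusters of its incident edges.
-/

open Finset

theorem MonotoneOn.card_filter_ne_succ_eq_card_image_sub_one {β : Type*} [PartialOrder β] [DecidableEq β]
    {g : ℕ → β} {n : ℕ} (hg : MonotoneOn g (range n)) :
    #{i ∈ range (n - 1) | g i ≠ g (i + 1)} = #((range n).image g) - 1 := by
  induction n with
  | zero => simp
  | succ n ih =>
    rcases n with _ | m
    · simp
    have hmono : MonotoneOn g (range (m + 1)) :=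
      hg.mono (by simp [Set.Iio_subset_Iio_iff])
    have hle : g m ≤ g (m + 1) := hg (by simp) (by simp) (by omega)
    rw [Nat.add_sub_cancel] at ih ⊢
    rw [range_add_one (n := m), range_add_one (n := m + 1), filter_insert, image_insert]
    have ih := ih hmono
    by_cases hjump : g m = g (m + 1)
    · have hmem : g (m + 1) ∈ (range (m + 1)).image g := mem_image.2 ⟨m, by simp, hjump⟩
      simpa [hjump, hmem] using ih
    · have hfresh : g (m + 1) ∉ (range (m + 1)).image g := by
        simp only [mem_image, mem_range, not_exists, not_and]
        intro i hi hgi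
        have : g i ≤ g m := hg (by simp; omega) (by simp) (by omega)
        exact hjump (le_antisymm hle (hgi ▸ this))
      have hne : ((range (m + 1)).image g).Nonempty := by simp
      rw [if_pos hjump, card_insert_of_notMem (by simp), card_insert_of_notMem hfresh]
      have := hne.card_pos
      omega

theorem List.Nodup.bijOn_getD {α : Type*} {l : List α} (hl : l.Nodup) (d : α) :
    Set.BijOn (l.getD · d) (Set.Iio l.length) {x | x ∈ l} := by
  refine ⟨fun i hi => ?_, fun i hi j hj hij => ?_, fun x hx => ?_⟩
  · rw [Set.mem_Iio] at hi
    show l.getD i d ∈ l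
    rw [List.getD_eq_getElem _ _ hi]
    exact List.getElem_mem hi
  · rw [Set.mem_Iio] at hi hj
    simp only [List.getD_eq_getElem _ _ hi, List.getD_eq_getElem _ _ hj] at hij
    exact (hl.getElem_inj_iff).1 hij
  · obtain ⟨i, hi, rfl⟩ := List.getElem_of_mem hx
    exact ⟨i, by simpa using hi, List.getD_eq_getElem _ _ hi⟩

theorem List.Pairwise.monotoneOn_getD {α β : Type*} [Preorder β] {f : α → β} {l : List α}
    (hl : l.Pairwise (fun a b => f a ≤ f b)) (d : α) :
    MonotoneOn (fun i => f (l.getD i d)) (Set.Iio l.length) := by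
  intro i hi j hj hij
  rw [Set.mem_Iio] at hi hj
  simp only [List.getD_eq_getElem _ _ hi, List.getD_eq_getElem _ _ hj]
  rcases hij.lt_or_eq with hlt | rfl
  · exact List.pairwise_iff_getElem.1 hl i j hi hj hlt
  · exact le_rfl

theorem Finset.exists_bijOn_range_monotoneOn_comp {α β : Type*} [Nonempty α] [LinearOrder β]
    (s : Finset α) (f : α → β) :
    ∃ σ : ℕ → α, Set.BijOn σ (range #s) s ∧ MonotoneOn (f ∘ σ) (range #s) := by
  set l := s.toList.mergeSort (fun a b => f a ≤ f b)
  have hperm : l.Perm s.toList := List.mergeSort_perm _ _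
  have hlen : l.length = #s := by rw [hperm.length_eq, length_toList]
  have hsorted : l.Pairwise (fun a b => f a ≤ f b) := by
    simpa using List.pairwise_mergeSort (le := fun a b => decide (f a ≤ f b))
      (fun _ _ _ hab hbc => by simp_all only [decide_eq_true_eq]; exact hab.trans hbc)
      (fun a b => by simpa using le_total (f a) (f b)) s.toList
  have hmem : {x | x ∈ l} = (s : Set α) := by ext; simp [hperm.mem_iff]
  refine ⟨(l.getD · (Classical.arbitrary α)), ?_, ?_⟩
  · simpa [hlen, hmem] using (hperm.nodup_iff.2 s.nodup_toList).bijOn_getD (Classical.arbitrary α)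
  · rw [coe_range, ← hlen]
    exact hsorted.monotoneOn_getD _

theorem stmt6_general {V : Type*} [Fintype V] [DecidableEq V] (G : SimpleGraph V)
    [DecidableRel G.Adj] {k : ℕ} (P : Sym2 V → Fin k) :
    ∃ σ : V → ℕ → Sym2 V,
      (∀ v : V, Set.BijOn (σ v) ↑(Finset.range (G.degree v)) ↑(G.incidenceFinset v)) ∧
      ∀ v : V, ((Finset.range (G.degree v - 1)).filter
          (fun i => P (σ v i) ≠ P (σ v (i + 1)))).card =
        ((G.incidenceFinset v).image P).card - 1 := by
  have hsortedEnum (v : V) : ∃ σv : ℕ → Sym2 V,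
      Set.BijOn σv (range (G.degree v)) (G.incidenceFinset v) ∧
        MonotoneOn (P ∘ σv) (range (G.degree v)) := by
    have : Nonempty (Sym2 V) := ⟨Sym2.diag v⟩
    rw [← G.card_incidenceFinset_eq_degree]
    exact (G.incidenceFinset v).exists_bijOn_range_monotoneOn_comp P
  choose σ hbij hmono using hsortedEnum
  refine ⟨σ, hbij, fun v => ?_⟩
  have himage : (range (G.degree v)).image (σ v) = G.incidenceFinset v :=
    coe_injective (by simpa using (hbij v).image_eq)
  rw [← himage, image_image]
  exact (hmono v).card_filter_ne_succ_eq_card_image_sub_one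

/-- given an edge partition P, there is a clone-and-connect transformation
(a path ordering σ v of each vertex's incident edges) such that the induced vertex partition
(cutting no original edge) cuts exactly p_v - 1 auxiliary edges at each vertex v, hence its
total auxiliary cut cost equals the vertex-cut cost of P. -/
theorem stmt6 {V : Type*} [Fintype V] [DecidableEq V] (G : SimpleGraph V)
    [DecidableRel G.Adj] (hpos : ∀ v : V, 0 < G.degree v) {k : ℕ} (P : Sym2 V → Fin k) :
    ∃ σ : V → ℕ → Sym2 V,
      (∀ v : V, Set.BijOn (σ v) ↑(Finset.range (G.degree v)) ↑(G.incidenceFinset v)) ∧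
      ∀ v : V, ((Finset.range (G.degree v - 1)).filter
          (fun i => P (σ v i) ≠ P (σ v (i + 1)))).card =
        ((G.incidenceFinset v).image P).card - 1 :=
  stmt6_general G P
end

section
/- Let OPT_ep(D) be the minimum vertex-cut cost over all balanced k-way edge partitions of D, and for a fixed clone-and-connect transformation D' let OPT_vp(D') be the minimum auxiliary-edge cut cost over corresponding balanced vertex partitions of D' cutting no original edge. Then OPT_ep(D) ≤ OPT_vp(D') ≤ (d_max − 1) · OPT_ep(D), where d_max is the maximum degree of D, provided OPT_ep(D) ≥ 1 (equivalently, OPT_ep(D) > 0) — in the case OPT_ep(D) = 0 one has OPT_vp(D') = 0 as well. -/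
/-!
Fix a balanced edge partition `P`. At a vertex `v`, walking along the clone path of `v`
(the edges at `v` in the order `σ v`), every new cluster is entered through a cut auxiliary
edge, so at least `p_v - 1` of them are cut. Conversely there are only `deg v - 1 ≤ d_max - 1`
auxiliary edges, and some of them are cut only if `p_v ≥ 2`. Summing over `v` compares the two
costs of every balanced `P` within the factor `d_max - 1`, and taking minima over the same
family of partitions transfers the comparison to the optima.
-/

open Finset

section Changes

variable {α : Type*} [DecidableEq α] (g : ℕ → α)

theorem card_image_range_sub_one_le_card_changes (n : ℕ) :
    ((range n).image g).card - 1 ≤ #{i ∈ range (n - 1) | g i ≠ g (i + 1)} := by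
  induction n with
  | zero => simp
  | succ n ih =>
    rcases n with _ | n
    · simp
    simp only [Nat.add_sub_cancel] at ih ⊢
    have hchanges : {i ∈ range (n + 1) | g i ≠ g (i + 1)} =
        if g n ≠ g (n + 1) then insert n {i ∈ range n | g i ≠ g (i + 1)}
        else {i ∈ range n | g i ≠ g (i + 1)} := by
      rw [range_add_one, filter_insert]
    rw [range_add_one (n := n + 1), image_insert, hchanges]
    by_cases hstep : g n = g (n + 1)
    · have hmem : g (n + 1) ∈ (range (n + 1)).image g :=
        mem_image.mpr ⟨n, self_mem_range_succ n, hstep⟩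
      rw [insert_eq_self.mpr hmem, if_neg (not_not.mpr hstep)]
      exact ih
    · have hfresh : n ∉ {i ∈ range n | g i ≠ g (i + 1)} := by simp
      rw [if_pos hstep, card_insert_of_notMem hfresh]
      have := card_insert_le (g (n + 1)) ((range (n + 1)).image g)
      omega

theorem card_changes_le_mul {n m : ℕ} (hnm : n ≤ m) :
    #{i ∈ range (n - 1) | g i ≠ g (i + 1)} ≤ (m - 1) * (((range n).image g).card - 1) := by
  obtain hempty | ⟨i, hi⟩ := (filter (fun i => g i ≠ g (i + 1)) (range (n - 1))).eq_empty_or_nonempty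
  · simp [hempty]
  obtain ⟨hi_range, hchange⟩ := mem_filter.mp hi
  have hin := mem_range.mp hi_range
  have htwo : 2 ≤ ((range n).image g).card := by
    have hpair : {g i, g (i + 1)} ⊆ (range n).image g := by
      simp only [insert_subset_iff, singleton_subset_iff, mem_image, mem_range]
      exact ⟨⟨i, by omega, rfl⟩, ⟨i + 1, by omega, rfl⟩⟩
    simpa [card_pair hchange] using card_le_card hpair
  calc #{i ∈ range (n - 1) | g i ≠ g (i + 1)}
      ≤ n - 1 := (card_filter_le _ _).trans (card_range _).le
    _ ≤ (m - 1) * 1 := by omega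
    _ ≤ (m - 1) * (((range n).image g).card - 1) := Nat.mul_le_mul_left _ (by omega)

end Changes

theorem Nat.sInf_image_le_of_le_comp {ι : Type*} {s : Set ι} {f g : ι → ℕ} {φ : ℕ → ℕ}
    (h : ∀ x ∈ s, g x ≤ φ (f x)) : sInf (g '' s) ≤ φ (sInf (f '' s)) := by
  rcases s.eq_empty_or_nonempty with rfl | hs
  · simp
  obtain ⟨x, hx, hfx⟩ := Nat.sInf_mem (hs.image f)
  calc sInf (g '' s) ≤ g x := Nat.sInf_le ⟨x, hx, rfl⟩
    _ ≤ φ (f x) := h x hx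
    _ = φ (sInf (f '' s)) := by rw [hfx]

theorem SimpleGraph.image_incidenceFinset_eq {V β : Type*} [Fintype V] [DecidableEq V]
    [DecidableEq β] (G : SimpleGraph V) [DecidableRel G.Adj] {v : V} {s : ℕ → Sym2 V}
    (hs : Set.BijOn s ↑(range (G.degree v)) ↑(G.incidenceFinset v)) (P : Sym2 V → β) :
    (G.incidenceFinset v).image P = (range (G.degree v)).image (fun i => P (s i)) := by
  have himage : (range (G.degree v)).image s = G.incidenceFinset v :=
    coe_injective (by rw [coe_image]; exact hs.image_eq)
  rw [← himage, image_image]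
  rfl

theorem stmt8_general {V : Type*} [Fintype V] [DecidableEq V] (G : SimpleGraph V)
    [DecidableRel G.Adj] {k : ℕ}
    (σ : V → ℕ → Sym2 V)
    (hσ : ∀ v : V, Set.BijOn (σ v) ↑(Finset.range (G.degree v)) ↑(G.incidenceFinset v)) :
    let Balanced : (Sym2 V → Fin k) → Prop := fun P =>
      ∀ i : Fin k, (G.edgeFinset.filter (fun e => P e = i)).card = G.edgeFinset.card / k
    let A := sInf {c : ℕ | ∃ P : Sym2 V → Fin k, Balanced P ∧
      ∑ v : V, (((G.incidenceFinset v).image P).card - 1) = c}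
    let B := sInf {c : ℕ | ∃ Q : Sym2 V → Fin k, Balanced Q ∧
      ∑ v : V, ((Finset.range (G.degree v - 1)).filter
        (fun i => Q (σ v i) ≠ Q (σ v (i + 1)))).card = c}
    A ≤ B ∧ (1 ≤ A → B ≤ (G.maxDegree - 1) * A) ∧ (A = 0 → B = 0) := by
  intro Balanced A B
  have hlower : A ≤ B := Nat.sInf_image_le_of_le_comp (φ := id) fun P _ =>
    sum_le_sum fun v _ => by
      rw [G.image_incidenceFinset_eq (hσ v)]
      exact card_image_range_sub_one_le_card_changes _ _
  have hupper : B ≤ (G.maxDegree - 1) * A := Nat.sInf_image_le_of_le_comp fun P _ => by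
    rw [mul_sum]
    refine sum_le_sum fun v _ => ?_
    rw [G.image_incidenceFinset_eq (hσ v)]
    exact card_changes_le_mul _ (G.degree_le_maxDegree v)
  exact ⟨hlower, fun _ => hupper, fun hA => by simpa [hA] using hupper⟩

/-- OPT_ep(D) ≤ OPT_vp(D') ≤ (d_max - 1) · OPT_ep(D) when OPT_ep(D) ≥ 1,
and OPT_vp(D') = 0 when OPT_ep(D) = 0. -/
theorem stmt8 {V : Type*} [Fintype V] [DecidableEq V] (G : SimpleGraph V)
    [DecidableRel G.Adj] {k : ℕ} (hk : 0 < k) (hdvd : k ∣ G.edgeFinset.card)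
    (hpos : ∀ v : V, 0 < G.degree v) (hdmax : 2 ≤ G.maxDegree)
    (σ : V → ℕ → Sym2 V)
    (hσ : ∀ v : V, Set.BijOn (σ v) ↑(Finset.range (G.degree v)) ↑(G.incidenceFinset v)) :
    let Balanced : (Sym2 V → Fin k) → Prop := fun P =>
      ∀ i : Fin k, (G.edgeFinset.filter (fun e => P e = i)).card = G.edgeFinset.card / k
    let A := sInf {c : ℕ | ∃ P : Sym2 V → Fin k, Balanced P ∧
      ∑ v : V, (((G.incidenceFinset v).image P).card - 1) = c}
    let B := sInf {c : ℕ | ∃ Q : Sym2 V → Fin k, Balanced Q ∧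
      ∑ v : V, ((Finset.range (G.degree v - 1)).filter
        (fun i => Q (σ v i) ≠ Q (σ v (i + 1)))).card = c}
    A ≤ B ∧ (1 ≤ A → B ≤ (G.maxDegree - 1) * A) ∧ (A = 0 → B = 0) :=
  stmt8_general G σ hσ
end

section
/- A balanced k-way vertex partition of the clone-and-connect transform D' (each cluster receiving 2m/k cloned vertices, where m = |E(D)|) that cuts no original edge induces a perfectly balanced k-way edge partition of D (each cluster receiving m/k edges), and conversely. -/
open Finset

namespace SimpleGraph

variable {V : Type*} [Fintype V] [DecidableEq V] (G : SimpleGraph V) [DecidableRel G.Adj]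

theorem sum_card_filter_incidenceFinset (p : Sym2 V → Prop) [DecidablePred p] :
    ∑ v, #{e ∈ G.incidenceFinset v | p e} = 2 * #{e ∈ G.edgeFinset | p e} := by
  calc ∑ v, #{e ∈ G.incidenceFinset v | p e}
      = ∑ v, #({e ∈ G.edgeFinset | p e}.bipartiteAbove (· ∈ ·) v) := by
        simp only [bipartiteAbove, incidenceFinset_eq_filter, filter_filter, and_comm]
    _ = ∑ e ∈ G.edgeFinset with p e, #(univ.bipartiteBelow (· ∈ ·) e) :=
        sum_card_bipartiteAbove_eq_sum_card_bipartiteBelow _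
    _ = ∑ e ∈ G.edgeFinset with p e, 2 := by
        refine sum_congr rfl fun e he => ?_
        have he : e ∈ G.edgeSet := mem_edgeFinset.mp (mem_filter.mp he).1
        rw [← e.card_toFinset_of_not_isDiag (G.not_isDiag_of_mem_edgeSet he)]
        congr 1
        ext v
        simp [bipartiteBelow, Sym2.mem_toFinset]
    _ = 2 * #{e ∈ G.edgeFinset | p e} := by
        rw [sum_const, smul_eq_mul, mul_comm]

end SimpleGraph

/-- The partition of the clones cutting no original edge is encoded by `Q`: both clones lying on
the edge `e` go to cluster `Q e`. -/
theorem stmt15_general {V : Type*} [Fintype V] [DecidableEq V] (G : SimpleGraph V)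
    [DecidableRel G.Adj] {k : ℕ} (hdvd : k ∣ G.edgeFinset.card)
    (Q : Sym2 V → Fin k) :
    ∀ i : Fin k,
      (∑ v : V, ((G.incidenceFinset v).filter (fun e => Q e = i)).card =
          2 * G.edgeFinset.card / k ↔
        (G.edgeFinset.filter (fun e => Q e = i)).card = G.edgeFinset.card / k) := by
  intro i
  rw [G.sum_card_filter_incidenceFinset, Nat.mul_div_assoc 2 hdvd]
  omega

/-- a vertex partition of the clone-and-connect transform cutting no original
edge (encoded by a cluster Q e for each original edge e, each clone of v on e receiving
cluster Q e) is balanced on clones (2m/k clones per cluster) iff the induced edge partition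
of D is balanced (m/k edges per cluster). -/
theorem stmt15 {V : Type*} [Fintype V] [DecidableEq V] (G : SimpleGraph V)
    [DecidableRel G.Adj] {k : ℕ} (hk : 0 < k) (hdvd : k ∣ G.edgeFinset.card)
    (hpos : ∀ v : V, 0 < G.degree v) (Q : Sym2 V → Fin k) :
    ∀ i : Fin k,
      (∑ v : V, ((G.incidenceFinset v).filter (fun e => Q e = i)).card =
          2 * G.edgeFinset.card / k ↔
        (G.edgeFinset.filter (fun e => Q e = i)).card = G.edgeFinset.card / k) :=
  stmt15_general G hdvd Q
end
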